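/- Let V be a finite-dimensional complex vector space equipped with a real structure, i.e. a conjugate-linear involution σ : V → V. Suppose V carries an internal direct sum decomposition V = ⊕_{(p,q) ∈ ℤ×ℤ} V_{p,q} into complex subspaces such that the associated total grading is bounded below (there is N ∈ ℤ with V_{p,q} = 0 whenever p + q < N) and such that for all p, q one has σ(V_{p,q}) ⊆ V_{q,p} + ⊕_{r+s < p+q} V_{r,s}. Define W_i = ⊕_{p+q ≤ i} V_{p,q} and F^i = ⊕_{p ≥ i} V_{p,q}. Then (W_*, F^*) is an ℝ-mixed-Hodge structure on V: for every integer n and every integer p, the image of F^p ∩ W_n in W_n/W_{n-1} and the image of σ(F^{n+1-p} ∩ W_n) in W_n/W_{n-1} are complementary subspaces whose internal direct sum is all of W_n/W_{n-1}. -/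
import Mathlib

open DFinsupp

section Aux

variable {V : Type*} [AddCommGroup V] [Module ℂ V] (Vpq : ℤ × ℤ → Submodule ℂ V)

theorem aux_le_M (P : ℤ × ℤ → Prop) (pq : ℤ × ℤ) (h : P pq) :
    Vpq pq ≤ ⨆ pq, ⨆ _ : P pq, Vpq pq :=
  le_iSup_of_le pq (le_iSup (fun _ : P pq => Vpq pq) h)

theorem aux_M_mono (P Q : ℤ × ℤ → Prop) (h : ∀ pq, P pq → Q pq) :
    (⨆ pq, ⨆ _ : P pq, Vpq pq) ≤ ⨆ pq, ⨆ _ : Q pq, Vpq pq :=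
  iSup_le fun pq => iSup_le fun hp => aux_le_M Vpq Q pq (h pq hp)

theorem aux_mem_biSup (P : ℤ × ℤ → Prop) (x : V) :
    x ∈ (⨆ pq, ⨆ _ : P pq, Vpq pq) ↔
      ∃ f : Π₀ pq, Vpq pq, (∀ pq, ¬ P pq → f pq = 0) ∧
        DFinsupp.lsum ℕ (fun pq => (Vpq pq).subtype) f = x := by
  classical
  rw [Submodule.mem_biSup_iff_exists_dfinsupp]
  constructor
  · rintro ⟨f, rfl⟩
    refine ⟨f.filter P, fun pq h => ?_, rfl⟩
    simp [DFinsupp.filter_apply, h]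
  · rintro ⟨f, hf, rfl⟩
    refine ⟨f, ?_⟩
    congr 1
    ext pq
    by_cases h : P pq
    · simp [DFinsupp.filter_apply, h]
    · simp [DFinsupp.filter_apply, h, hf pq h]

theorem aux_inf_le (hind : iSupIndep Vpq) (P Q : ℤ × ℤ → Prop) :
    (⨆ pq, ⨆ _ : P pq, Vpq pq) ⊓ (⨆ pq, ⨆ _ : Q pq, Vpq pq) ≤
      ⨆ pq, ⨆ _ : (P pq ∧ Q pq), Vpq pq := by
  intro x hx
  rw [Submodule.mem_inf] at hx
  obtain ⟨hP, hQ⟩ := hx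
  rw [aux_mem_biSup] at hP hQ ⊢
  obtain ⟨f, hf, hfx⟩ := hP
  obtain ⟨g, hg, hgx⟩ := hQ
  have hfg : f = g := hind.dfinsupp_lsum_injective (by rw [hfx, hgx])
  subst hfg
  refine ⟨f, fun pq h => ?_, hfx⟩
  by_cases hp : P pq
  · exact hg pq fun hq => h ⟨hp, hq⟩
  · exact hf pq hp

end Aux

/-- Morgan's Proposition 1.11 (Proposition 2.4 of the paper), the converse to the
splitting of a mixed Hodge structure.  `V` is a finite-dimensional complex vector space
with a real structure given by a conjugate-linear involution `σ`, and
`V = ⊕_{(p,q) ∈ ℤ×ℤ} V_{p,q}` is an internal direct sum decomposition whose total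
grading is bounded below and which satisfies `σ(V_{p,q}) ⊆ V_{q,p} + ⊕_{r+s<p+q} V_{r,s}`.
Setting `W_i = ⊕_{p+q ≤ i} V_{p,q}` and `F^i = ⊕_{p ≥ i} V_{p,q}`, the pair `(W, F)` is
an ℝ-mixed-Hodge structure: for all integers `n` and `p`, the images of `F^p ∩ W_n` and
of `σ(F^{n+1-p}) ∩ W_n` in the quotient `V / W_{n-1}` intersect trivially and together
span the image of `W_n` (i.e. they are complementary subspaces of `W_n / W_{n-1}`). -/
theorem stmt_1 {V : Type*} [AddCommGroup V] [Module ℂ V] [FiniteDimensional ℂ V]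
    (σ : V →ₛₗ[starRingEnd ℂ] V) (hσ : ∀ v, σ (σ v) = v)
    (Vpq : ℤ × ℤ → Submodule ℂ V)
    (hint : DirectSum.IsInternal Vpq)
    (hbdd : ∃ N : ℤ, ∀ p q : ℤ, p + q < N → Vpq (p, q) = ⊥)
    (hconj : ∀ p q : ℤ,
      Submodule.map σ (Vpq (p, q)) ≤
        Vpq (q, p) ⊔ ⨆ rs : ℤ × ℤ, ⨆ _ : rs.1 + rs.2 < p + q, Vpq rs)
    (W F : ℤ → Submodule ℂ V)
    (hW : ∀ i : ℤ, W i = ⨆ pq : ℤ × ℤ, ⨆ _ : pq.1 + pq.2 ≤ i, Vpq pq)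
    (hF : ∀ i : ℤ, F i = ⨆ pq : ℤ × ℤ, ⨆ _ : i ≤ pq.1, Vpq pq) :
    ∀ n p : ℤ,
      Submodule.map (W (n - 1)).mkQ (F p ⊓ W n) ⊓
          Submodule.map (W (n - 1)).mkQ (Submodule.map σ (F (n + 1 - p)) ⊓ W n) = ⊥ ∧
      Submodule.map (W (n - 1)).mkQ (F p ⊓ W n) ⊔
          Submodule.map (W (n - 1)).mkQ (Submodule.map σ (F (n + 1 - p)) ⊓ W n) =
        Submodule.map (W (n - 1)).mkQ (W n) := by
  intro n p
  have hind : iSupIndep Vpq := hint.submodule_iSupIndep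
  set π := (W (n - 1)).mkQ with hπ
  -- the "lower" sup is inside W m
  have hlow : ∀ m : ℤ, (⨆ rs : ℤ × ℤ, ⨆ _ : rs.1 + rs.2 < m, Vpq rs) ≤ W (m - 1) := by
    intro m
    rw [hW (m - 1)]
    exact aux_M_mono Vpq _ _ (fun pq h => by omega)
  -- W is monotone
  have hWmono : ∀ i j : ℤ, i ≤ j → W i ≤ W j := by
    intro i j hij
    rw [hW i, hW j]
    exact aux_M_mono Vpq _ _ (fun pq h => le_trans h hij)
  -- σ preserves each W m
  have hσW : ∀ m : ℤ, Submodule.map σ (W m) ≤ W m := by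
    intro m
    conv_lhs => rw [hW m]
    rw [Submodule.map_iSup]
    refine iSup_le fun pq => ?_
    rw [Submodule.map_iSup]
    refine iSup_le fun hpq => ?_
    refine le_trans (hconj pq.1 pq.2) (sup_le ?_ ?_)
    · rw [hW m]; exact aux_le_M Vpq _ (pq.2, pq.1) (by omega)
    · exact le_trans (hlow (pq.1 + pq.2)) (hWmono _ _ (by omega))
  have hσWmem : ∀ m : ℤ, ∀ v ∈ W m, σ v ∈ W m := fun m v hv =>
    hσW m ⟨v, hv, rfl⟩
  -- decompositions of F ⊓ W
  have hFW : ∀ t : ℤ, F t ⊓ W n ≤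
      (⨆ pq : ℤ × ℤ, ⨆ _ : (pq.1 + pq.2 = n ∧ t ≤ pq.1), Vpq pq) ⊔ W (n - 1) := by
    intro t
    rw [hF t, hW n, hW (n - 1)]
    refine le_trans (aux_inf_le Vpq hind _ _) ?_
    refine iSup_le fun pq => iSup_le fun hpq => ?_
    rcases eq_or_lt_of_le hpq.2 with h | h
    · exact le_sup_of_le_left (aux_le_M Vpq _ pq ⟨h, hpq.1⟩)
    · exact le_sup_of_le_right (aux_le_M Vpq _ pq (by omega))
  refine ⟨?_, ?_⟩
  · -- trivial intersection
    rw [eq_bot_iff]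
    intro x hx
    rw [Submodule.mem_inf] at hx
    obtain ⟨hxA, hxB⟩ := hx
    obtain ⟨a, ha', hax⟩ := hxA
    obtain ⟨b, hb', hbx⟩ := hxB
    have ha : a ∈ F p ⊓ W n := ha'
    have hb : b ∈ Submodule.map σ (F (n + 1 - p)) ⊓ W n := hb'
    rw [Submodule.mem_inf] at ha hb
    obtain ⟨c, hc, hcb⟩ := hb.1
    have hcW : c ∈ W n := by
      have : c = σ b := by rw [← hcb, hσ]
      rw [this]; exact hσWmem n b hb.2
    -- a = g + w1 with g in the upper graded piece
    obtain ⟨g, hg, w1, hw1, hgw1⟩ :=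
      Submodule.mem_sup.mp (hFW p ⟨ha.1, ha.2⟩)
    -- c = g' + w2
    obtain ⟨g', hg', w2, hw2, hgw2⟩ :=
      Submodule.mem_sup.mp (hFW (n + 1 - p) ⟨hc, hcW⟩)
    -- σ g' lands in the lower graded piece mod W (n-1)
    have hσg' : σ g' ∈ (⨆ pq : ℤ × ℤ, ⨆ _ : (pq.1 + pq.2 = n ∧ pq.1 ≤ p - 1), Vpq pq)
        ⊔ W (n - 1) := by
      have hmap : Submodule.map σ
          (⨆ pq : ℤ × ℤ, ⨆ _ : (pq.1 + pq.2 = n ∧ n + 1 - p ≤ pq.1), Vpq pq) ≤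
          (⨆ pq : ℤ × ℤ, ⨆ _ : (pq.1 + pq.2 = n ∧ pq.1 ≤ p - 1), Vpq pq) ⊔ W (n - 1) := by
        rw [Submodule.map_iSup]
        refine iSup_le fun pq => ?_
        rw [Submodule.map_iSup]
        refine iSup_le fun hpq => ?_
        refine le_trans (hconj pq.1 pq.2) (sup_le ?_ ?_)
        · exact le_sup_of_le_left (aux_le_M Vpq _ (pq.2, pq.1) (by omega))
        · refine le_sup_of_le_right (le_trans (hlow (pq.1 + pq.2)) ?_)
          exact hWmono _ _ (by omega)
      exact hmap ⟨g', hg', rfl⟩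
    obtain ⟨h, hh, w3, hw3, hhw3⟩ := Submodule.mem_sup.mp hσg'
    -- a - b ∈ W (n-1)
    have hab : a - b ∈ W (n - 1) := by
      rw [← Submodule.ker_mkQ (W (n - 1))]
      rw [LinearMap.mem_ker, map_sub, hax, hbx, sub_self]
    -- g - h ∈ W (n-1)
    have hb' : b = h + (w3 + σ w2) := by
      rw [← hcb, ← hgw2, map_add, ← hhw3]; abel
    have hgh : g - h ∈ W (n - 1) := by
      have : g - h = (a - b) - w1 + (w3 + σ w2) := by
        rw [hb', ← hgw1]; abel
      rw [this]
      exact Submodule.add_mem _ (Submodule.sub_mem _ hab hw1)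
        (Submodule.add_mem _ hw3 (hσWmem (n - 1) w2 hw2))
    -- g lies in two disjoint pieces, hence is 0
    have hg0 : g = 0 := by
      have hgmem : g ∈ (⨆ pq : ℤ × ℤ,
          ⨆ _ : ((pq.1 + pq.2 = n ∧ pq.1 ≤ p - 1) ∨ pq.1 + pq.2 ≤ n - 1), Vpq pq) := by
        have : g = h + (g - h) := by abel
        rw [this]
        refine Submodule.add_mem _ ?_ ?_
        · exact aux_M_mono Vpq _ _ (fun pq hp => Or.inl hp) hh
        · have := hgh; rw [hW (n - 1)] at this
          exact aux_M_mono Vpq _ _ (fun pq hp => Or.inr hp) this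
      have hbot := aux_inf_le Vpq hind
        (fun pq => pq.1 + pq.2 = n ∧ p ≤ pq.1)
        (fun pq => (pq.1 + pq.2 = n ∧ pq.1 ≤ p - 1) ∨ pq.1 + pq.2 ≤ n - 1)
        (Submodule.mem_inf.mpr ⟨hg, hgmem⟩)
      have : (⨆ pq : ℤ × ℤ, ⨆ _ : ((pq.1 + pq.2 = n ∧ p ≤ pq.1) ∧
          ((pq.1 + pq.2 = n ∧ pq.1 ≤ p - 1) ∨ pq.1 + pq.2 ≤ n - 1)), Vpq pq) ≤ ⊥ := by
        refine iSup_le fun pq => iSup_le fun hpq => absurd hpq (by omega)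
      simpa using this hbot
    -- conclude x = 0
    have : x = 0 := by
      rw [← hax, ← hgw1, hg0, zero_add, hπ]
      exact (Submodule.Quotient.mk_eq_zero _).mpr hw1
    simp [this]
  · -- spanning
    refine le_antisymm (sup_le (Submodule.map_mono inf_le_right)
      (Submodule.map_mono inf_le_right)) ?_
    conv_lhs => rw [hW n]
    rw [Submodule.map_iSup]
    refine iSup_le fun pq => ?_
    rw [Submodule.map_iSup]
    refine iSup_le fun hpq => ?_
    rcases eq_or_lt_of_le hpq with hsum | hsum
    · -- pq.1 + pq.2 = n
      rcases le_or_gt p pq.1 with hp | hp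
      · -- in F p
        refine le_sup_of_le_left (Submodule.map_mono (le_inf ?_ ?_))
        · rw [hF p]; exact aux_le_M Vpq _ pq hp
        · rw [hW n]; exact aux_le_M Vpq _ pq (by omega)
      · -- pq.1 < p : use conjugation
        refine le_sup_of_le_right ?_
        rintro x ⟨v, hv, rfl⟩
        have hσv : σ v ∈ Vpq (pq.2, pq.1) ⊔ W (n - 1) := by
          refine le_trans (hconj pq.1 pq.2) (sup_le le_sup_left ?_) ?_
          · exact le_sup_of_le_right (le_trans (hlow (pq.1 + pq.2))
              (hWmono _ _ (by omega)))
          · exact ⟨v, hv, rfl⟩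
        obtain ⟨u, hu, w, hw, huw⟩ := Submodule.mem_sup.mp hσv
        have hvdec : v = σ u + σ w := by
          rw [← map_add, huw, hσ]
        have hσuF : σ u ∈ Submodule.map σ (F (n + 1 - p)) := by
          refine ⟨u, ?_, rfl⟩
          rw [hF (n + 1 - p)]
          exact aux_le_M Vpq _ (pq.2, pq.1) (by omega) hu
        have hσuW : σ u ∈ W n := by
          have hvW : v ∈ W n := by
            rw [hW n]; exact aux_le_M Vpq _ pq (by omega) hv
          have : σ u = v - σ w := by rw [hvdec]; abel
          rw [this]
          exact Submodule.sub_mem _ hvW (hWmono (n-1) n (by omega)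
            (hσWmem (n - 1) w hw))
        have : π v = π (σ u) := by
          rw [hvdec, map_add]
          have : π (σ w) = 0 := (Submodule.Quotient.mk_eq_zero _).mpr
            (hσWmem (n - 1) w hw)
          rw [this, add_zero]
        rw [this]
        exact ⟨σ u, Submodule.mem_inf.mpr ⟨hσuF, hσuW⟩, rfl⟩
    · -- pq.1 + pq.2 ≤ n - 1 : dies in the quotient
      refine le_trans ?_ (bot_le : (⊥ : Submodule ℂ (V ⧸ W (n - 1))) ≤ _)
      rw [Submodule.map_le_iff_le_comap, hπ, Submodule.comap_bot, Submodule.ker_mkQ,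
        hW (n - 1)]
      exact aux_le_M Vpq _ pq (by omega)
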